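/- Let f, h : Br_n → ℝ. Then the following are equivalent: (i) for every x ∈ S, f(x) = Σ_{y ∈ Br_n, x·y ∈ S} h(x·y) (a finite sum, the set S of simple braids being finite); (ii) for every x ∈ S, h(x) = Σ_{X ⊆ Σ with x·Δ̂(X) ∈ S} (−1)^{|X|} f(x·Δ̂(X)). -/

import Mathlib

open scoped Classical

namespace BraidMeasure

/-- Defining relations of the positive braid monoid on `n` strands,
with Artin generators indexed by `Fin (n - 1)`. -/
inductive BraidRel (n : ℕ) :
    FreeMonoid (Fin (n - 1)) → FreeMonoid (Fin (n - 1)) → Prop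
  | comm (i j : Fin (n - 1)) (h : (i : ℕ) + 2 ≤ (j : ℕ)) :
      BraidRel n (FreeMonoid.of i * FreeMonoid.of j)
        (FreeMonoid.of j * FreeMonoid.of i)
  | braid (i j : Fin (n - 1)) (h : (i : ℕ) + 1 = (j : ℕ)) :
      BraidRel n (FreeMonoid.of i * FreeMonoid.of j * FreeMonoid.of i)
        (FreeMonoid.of j * FreeMonoid.of i * FreeMonoid.of j)

/-- The positive braid monoid `Br_n`, presented by the Artin relations. -/
def BraidMonoid (n : ℕ) : Type := (conGen (BraidRel n)).Quotient

instance (n : ℕ) : Monoid (BraidMonoid n) :=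
  inferInstanceAs (Monoid (conGen (BraidRel n)).Quotient)

/-- The Artin generator `σ_{i+1}` of `Br_n`. -/
def gen {n : ℕ} (i : Fin (n - 1)) : BraidMonoid n :=
  (conGen (BraidRel n)).mk' (FreeMonoid.of i)

/-- Left divisibility: `x ≤_l y` iff `∃ z, y = x * z`. -/
def ldvd {n : ℕ} (x y : BraidMonoid n) : Prop := ∃ z, y = x * z

/-- Right divisibility: `x ≤_r y` iff `∃ z, y = z * x`. -/
def rdvd {n : ℕ} (x y : BraidMonoid n) : Prop := ∃ z, y = z * x

/-- `σ_{i+1}` for a natural number index, with junk value `1` out of range. -/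
def gen' {n : ℕ} (i : ℕ) : BraidMonoid n :=
  if h : i < n - 1 then gen ⟨i, h⟩ else 1

/-- The Garside element `Δ_n = (σ_1 ⋯ σ_{n-1})(σ_1 ⋯ σ_{n-2}) ⋯ (σ_1 σ_2) σ_1`. -/
def garside (n : ℕ) : BraidMonoid n :=
  ((List.range (n - 1)).map fun j =>
    ((List.range (n - 1 - j)).map fun i => (gen' i : BraidMonoid n)).prod).prod

/-- The set of simple braids: left divisors of `Δ_n`. -/
def Simples (n : ℕ) : Set (BraidMonoid n) := {x | ldvd x (garside n)}

/-- `L(y) = {σ_i : σ_i ≤_l y}` (as a set of indices). -/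
def Lset {n : ℕ} (y : BraidMonoid n) : Set (Fin (n - 1)) := {i | ldvd (gen i) y}

/-- `R(x) = {σ_i : x · σ_i ∉ S}` (as a set of indices). -/
def Rset {n : ℕ} (x : BraidMonoid n) : Set (Fin (n - 1)) :=
  {i | x * gen i ∉ Simples n}

/-- The relation `x → y` between simple braids: `L(y) ⊆ R(x)`. -/
def Arrow {n : ℕ} (x y : BraidMonoid n) : Prop := Lset y ⊆ Rset x

/-- The Möbius polynomial of the positive braid monoid:
`H_0 = H_1 = 1`, `H_n = ∑_{k=1}^{n} (-1)^{k+1} t^{k(k-1)/2} H_{n-k}`. -/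
noncomputable def mobiusH : ℕ → Polynomial ℤ
  | 0 => 1
  | 1 => 1
  | (n + 2) =>
      ∑ j ∈ Finset.range (n + 2),
        (-1 : Polynomial ℤ) ^ j * Polynomial.X ^ ((j + 1) * j / 2) * mobiusH (n + 1 - j)
  termination_by n => n
  decreasing_by omega

/-!
Both conditions are Möbius inversion for left divisibility restricted to the left-divisor-closed
set `S`. For `X ⊆ Σ` left cancellation makes `z ↦ Δ̂(X) z` a bijection from
`{z | x Δ̂(X) z ∈ S}` onto `{y | x y ∈ S, Δ̂(X) ≤_l y}`, and `Δ̂(X) ≤_l y` iff `X ⊆ L(y)`. After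
exchanging the sums, (i) ⇒ (ii) reduces to `∑_{X ⊆ L(y)} (-1)^|X| = [L(y) = ∅] = [y = 1]`;
(ii) ⇒ (i) is the mirror argument with right divisibility and right cancellation.

Cancellativity of `Br_n` is Garside's theorem, proved here on words: if `i u ≡ j v` then `u ≡ v`
when `i = j`, and otherwise both words factor through the lcm of `σ_i` and `σ_j`. The induction
runs on the length of `u` and along the chain of elementary moves from `i u` to `j v`; a move at
the head reduces to the cube condition for three generators, which is checked by cases according
to which of them commute.
-/

open Finset

section MobiusInversion

variable {M ι : Type*} [Fintype ι]

theorem sum_neg_one_pow_card_filter [One M] (r : M → M → Prop) (g : ι → M)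
    (D : Finset ι → M) (hD : ∀ X y, r (D X) y ↔ ∀ i ∈ X, r (g i) y)
    (hg : ∀ y, (∃ i, r (g i) y) ↔ y ≠ 1) (y : M) :
    ∑ X with r (D X) y, (-1 : ℝ) ^ #X = if y = 1 then 1 else 0 := by
  have hpow : ({X | r (D X) y} : Finset (Finset ι)) = ({i | r (g i) y} : Finset ι).powerset := by
    ext X
    simp [hD, subset_iff]
  have hempty : ({i | r (g i) y} : Finset ι) = ∅ ↔ y = 1 := by
    rw [filter_eq_empty_iff, ← not_ne_iff, ← hg y]
    simp
  rw [hpow, ← hempty]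
  exact_mod_cast sum_powerset_neg_one_pow_card

theorem sum_neg_one_pow_mul_sum_filter [One M] (r : M → M → Prop) (g : ι → M)
    (D : Finset ι → M) (hD : ∀ X y, r (D X) y ↔ ∀ i ∈ X, r (g i) y)
    (hg : ∀ y, (∃ i, r (g i) y) ↔ y ≠ 1)
    {T : Finset M} (hT : 1 ∈ T) (φ : M → ℝ) :
    ∑ X : Finset ι, (-1 : ℝ) ^ #X * ∑ y ∈ T with r (D X) y, φ y = φ 1 := by
  calc _ = ∑ y ∈ T, (∑ X with r (D X) y, (-1 : ℝ) ^ #X) * φ y := by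
          simp only [mul_sum, sum_filter, sum_mul, ite_mul, zero_mul, mul_ite, mul_zero]
          rw [sum_comm]
    _ = φ 1 := by
          simp only [sum_neg_one_pow_card_filter r g D hD hg, ite_mul, one_mul, zero_mul]
          rw [sum_ite_eq' T 1, if_pos hT]

variable [Monoid M] {S : Set M}

theorem sum_toFinset_mul_left [IsLeftCancelMul M] (hfin : ∀ x, {y | x * y ∈ S}.Finite)
    (x a : M) (φ : M → ℝ) :
    ∑ z ∈ (hfin (x * a)).toFinset, φ (a * z) = ∑ y ∈ (hfin x).toFinset with a ∣ y, φ y := by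
  have himage : (hfin (x * a)).toFinset.image (a * ·) = {y ∈ (hfin x).toFinset | a ∣ y} := by
    ext y
    simp only [mem_image, Set.Finite.mem_toFinset, Set.mem_ofPred_eq, mem_filter, mul_assoc]
    constructor
    · rintro ⟨z, hz, rfl⟩
      exact ⟨hz, dvd_mul_right a z⟩
    · rintro ⟨hy, z, rfl⟩
      exact ⟨z, hy, rfl⟩
  rw [← himage, sum_image fun _ _ _ _ h => mul_left_cancel h]

theorem sum_toFinset_mul_right [IsRightCancelMul M] (hS : ∀ x y, x * y ∈ S → x ∈ S)
    (hfin : ∀ x, {y | x * y ∈ S}.Finite) (x a : M) (φ : M → ℝ) :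
    ∑ y ∈ (hfin x).toFinset with x * (y * a) ∈ S, φ (y * a) =
      ∑ w ∈ (hfin x).toFinset with ∃ z, w = z * a, φ w := by
  have himage : ({y ∈ (hfin x).toFinset | x * (y * a) ∈ S}).image (· * a) =
      {w ∈ (hfin x).toFinset | ∃ z, w = z * a} := by
    ext w
    simp only [mem_image, Set.Finite.mem_toFinset, Set.mem_ofPred_eq, mem_filter]
    constructor
    · rintro ⟨y, ⟨-, hy⟩, rfl⟩
      exact ⟨hy, y, rfl⟩
    · rintro ⟨hw, y, rfl⟩
      exact ⟨y, ⟨hS _ _ (by rwa [← mul_assoc] at hw), hw⟩, rfl⟩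
  rw [← himage, sum_image fun _ _ _ _ h => mul_right_cancel h]

theorem sum_signed_eq_of_eq_sum [IsLeftCancelMul M] (g : ι → M) (D : Finset ι → M)
    (hD : ∀ X y, D X ∣ y ↔ ∀ i ∈ X, g i ∣ y) (hg : ∀ y, (∃ i, g i ∣ y) ↔ y ≠ 1)
    (hS : ∀ x y, x * y ∈ S → x ∈ S) (hfin : ∀ x, {y | x * y ∈ S}.Finite) {f h : M → ℝ}
    (hf : ∀ x ∈ S, f x = ∑ y ∈ (hfin x).toFinset, h (x * y)) {x : M} (hx : x ∈ S) :
    h x = ∑ X : Finset ι, if x * D X ∈ S then (-1 : ℝ) ^ #X * f (x * D X) else 0 := by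
  symm
  calc _ = ∑ X : Finset ι, (-1 : ℝ) ^ #X *
          ∑ y ∈ (hfin x).toFinset with D X ∣ y, h (x * y) := by
        refine sum_congr rfl fun X _ => ?_
        split_ifs with hX
        · rw [hf _ hX, ← sum_toFinset_mul_left hfin x (D X) (fun y => h (x * y))]
          simp only [mul_assoc]
        · rw [filter_false_of_mem, sum_empty, mul_zero]
          rintro y hy ⟨z, rfl⟩
          rw [Set.Finite.mem_toFinset, Set.mem_ofPred_eq, ← mul_assoc] at hy
          exact hX (hS _ _ hy)
    _ = h (x * 1) := sum_neg_one_pow_mul_sum_filter (· ∣ ·) g D hD hg (by simpa using hx) _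
    _ = h x := by rw [mul_one]

theorem eq_sum_of_sum_signed_eq [IsRightCancelMul M] (g : ι → M) (D : Finset ι → M)
    (hD : ∀ X y, (∃ z, y = z * D X) ↔ ∀ i ∈ X, ∃ z, y = z * g i)
    (hg : ∀ y, (∃ i z, y = z * g i) ↔ y ≠ 1)
    (hS : ∀ x y, x * y ∈ S → x ∈ S) (hfin : ∀ x, {y | x * y ∈ S}.Finite) {f h : M → ℝ}
    (hh : ∀ x ∈ S, h x = ∑ X : Finset ι, if x * D X ∈ S then (-1 : ℝ) ^ #X * f (x * D X) else 0)
    {x : M} (hx : x ∈ S) :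
    f x = ∑ y ∈ (hfin x).toFinset, h (x * y) := by
  symm
  calc _ = ∑ y ∈ (hfin x).toFinset, ∑ X : Finset ι,
          if x * y * D X ∈ S then (-1 : ℝ) ^ #X * f (x * y * D X) else 0 :=
        sum_congr rfl fun y hy => hh _ ((hfin x).mem_toFinset.1 hy)
    _ = ∑ X : Finset ι, (-1 : ℝ) ^ #X *
          ∑ y ∈ (hfin x).toFinset with x * (y * D X) ∈ S, f (x * (y * D X)) := by
        rw [sum_comm]
        simp only [mul_sum, sum_filter, mul_ite, mul_zero, mul_assoc]
    _ = ∑ X : Finset ι, (-1 : ℝ) ^ #X *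
          ∑ w ∈ (hfin x).toFinset with ∃ z, w = z * D X, f (x * w) :=
        sum_congr rfl fun X _ =>
          congrArg _ (sum_toFinset_mul_right hS hfin x (D X) fun w => f (x * w))
    _ = f (x * 1) :=
        sum_neg_one_pow_mul_sum_filter (fun a b => ∃ z, b = z * a) g D hD hg (by simpa using hx) _
    _ = f x := by rw [mul_one]

theorem mobius_inversion_of_lcm [IsCancelMul M] (g : ι → M) (D : Finset ι → M)
    (hDl : ∀ X y, D X ∣ y ↔ ∀ i ∈ X, g i ∣ y) (hgl : ∀ y, (∃ i, g i ∣ y) ↔ y ≠ 1)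
    (hDr : ∀ X y, (∃ z, y = z * D X) ↔ ∀ i ∈ X, ∃ z, y = z * g i)
    (hgr : ∀ y, (∃ i z, y = z * g i) ↔ y ≠ 1)
    (hS : ∀ x y, x * y ∈ S → x ∈ S) (hfin : ∀ x, {y | x * y ∈ S}.Finite) (f h : M → ℝ) :
    (∀ x ∈ S, f x = ∑ y ∈ (hfin x).toFinset, h (x * y)) ↔
      ∀ x ∈ S, h x = ∑ X : Finset ι, if x * D X ∈ S then (-1 : ℝ) ^ #X * f (x * D X) else 0 :=
  ⟨fun hf _ hx => sum_signed_eq_of_eq_sum g D hDl hgl hS hfin hf hx,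
    fun hh _ hx => eq_sum_of_sum_signed_eq g D hDr hgr hS hfin hh hx⟩

end MobiusInversion

variable {n : ℕ}

def Far (i j : Fin (n - 1)) : Prop := (i : ℕ) + 2 ≤ j ∨ (j : ℕ) + 2 ≤ i

def Adj (i j : Fin (n - 1)) : Prop := (i : ℕ) + 1 = j ∨ (j : ℕ) + 1 = i

instance (i j : Fin (n - 1)) : Decidable (Far i j) := inferInstanceAs (Decidable (_ ∨ _))

section Generators

variable {i j p : Fin (n - 1)}

theorem Far.symm (h : Far i j) : Far j i := Or.symm h

theorem Adj.symm (h : Adj i j) : Adj j i := Or.symm h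

theorem Far.ne (h : Far i j) : i ≠ j := by
  rintro rfl
  unfold Far at h
  omega

theorem Adj.ne (h : Adj i j) : i ≠ j := by
  rintro rfl
  unfold Adj at h
  omega

theorem Adj.not_far (h : Adj i j) : ¬Far i j := by
  unfold Far Adj at *
  omega

theorem far_or_adj_of_ne (h : i ≠ j) : Far i j ∨ Adj i j := by
  have := Fin.val_ne_of_ne h
  unfold Far Adj
  omega

theorem Far.of_adj_of_adj (hi : Adj p i) (hj : Adj p j) (hij : i ≠ j) : Far i j := by
  have := Fin.val_ne_of_ne hij
  unfold Far Adj at *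
  omega

end Generators

inductive BraidStep : List (Fin (n - 1)) → List (Fin (n - 1)) → Prop
  | comm {i j : Fin (n - 1)} (t : List (Fin (n - 1))) (h : Far i j) :
      BraidStep (i :: j :: t) (j :: i :: t)
  | braid {i j : Fin (n - 1)} (t : List (Fin (n - 1))) (h : Adj i j) :
      BraidStep (i :: j :: i :: t) (j :: i :: j :: t)
  | cons (a : Fin (n - 1)) {u v : List (Fin (n - 1))} :
      BraidStep u v → BraidStep (a :: u) (a :: v)

def BraidEquiv : List (Fin (n - 1)) → List (Fin (n - 1)) → Prop :=
  Relation.ReflTransGen BraidStep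

local infix:50 " ≈ᵇ " => BraidEquiv

variable {i j p a : Fin (n - 1)} {s t u v w c : List (Fin (n - 1))}

namespace BraidStep

theorem symm (h : BraidStep u v) : BraidStep v u := by
  induction h with
  | comm t h => exact .comm t h.symm
  | braid t h => exact .braid t h.symm
  | cons a _ ih => exact .cons a ih

theorem length_eq (h : BraidStep u v) : u.length = v.length := by
  induction h with
  | comm | braid => rfl
  | cons a _ ih => simp [ih]

theorem append_right (s : List (Fin (n - 1))) (h : BraidStep u v) :
    BraidStep (u ++ s) (v ++ s) := by
  induction h with
  | comm t h => exact .comm _ h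
  | braid t h => exact .braid _ h
  | cons a _ ih => exact .cons a ih

end BraidStep

namespace BraidEquiv

@[refl]
theorem refl (u : List (Fin (n - 1))) : u ≈ᵇ u := Relation.ReflTransGen.refl

theorem trans (h : u ≈ᵇ v) (h' : v ≈ᵇ w) : u ≈ᵇ w :=
  Relation.ReflTransGen.trans h h'

instance : Trans (BraidEquiv (n := n)) BraidEquiv BraidEquiv := ⟨trans⟩

theorem of_step (h : BraidStep u v) : u ≈ᵇ v := Relation.ReflTransGen.single h

theorem comm (h : Far i j) (t : List (Fin (n - 1))) : i :: j :: t ≈ᵇ j :: i :: t :=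
  of_step (.comm t h)

theorem braid (h : Adj i j) (t : List (Fin (n - 1))) :
    i :: j :: i :: t ≈ᵇ j :: i :: j :: t :=
  of_step (.braid t h)

theorem symm (h : u ≈ᵇ v) : v ≈ᵇ u := by
  induction h with
  | refl => rfl
  | tail _ hstep ih => exact (of_step hstep.symm).trans ih

theorem length_eq (h : u ≈ᵇ v) : u.length = v.length := by
  induction h with
  | refl => rfl
  | tail _ hstep ih => exact ih.trans hstep.length_eq

theorem cons (a : Fin (n - 1)) (h : u ≈ᵇ v) : a :: u ≈ᵇ a :: v := by
  induction h with
  | refl => rfl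
  | tail _ hstep ih => exact ih.trans (of_step (.cons a hstep))

theorem append_left (s : List (Fin (n - 1))) (h : u ≈ᵇ v) : s ++ u ≈ᵇ s ++ v := by
  induction s with
  | nil => exact h
  | cons a s ih => exact ih.cons a

theorem append_right (s : List (Fin (n - 1))) (h : u ≈ᵇ v) : u ++ s ≈ᵇ v ++ s := by
  induction h with
  | refl => rfl
  | tail _ hstep ih => exact ih.trans (of_step (hstep.append_right s))

theorem of_step_reverse (h : BraidStep u v) : u.reverse ≈ᵇ v.reverse := by
  induction h with
  | comm t h => simpa using append_left t.reverse (comm h.symm [])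
  | braid t h => simpa using append_left t.reverse (braid h [])
  | cons a _ ih => simpa using ih.append_right [a]

theorem reverse (h : u ≈ᵇ v) : u.reverse ≈ᵇ v.reverse := by
  induction h with
  | refl => rfl
  | tail _ hstep ih => exact ih.trans (of_step_reverse hstep)

theorem cons_append_of_far (h : ∀ a ∈ s, Far p a) (d : List (Fin (n - 1))) :
    p :: (s ++ d) ≈ᵇ s ++ p :: d := by
  induction s with
  | nil => rfl
  | cons a s ih =>
    simp only [List.mem_cons, forall_eq_or_imp] at h
    exact (comm h.1 _).trans ((ih h.2).cons a)

end BraidEquiv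

/-- `i :: lcmCofactor i j` and `j :: lcmCofactor j i` are the two spellings of the least common
multiple of `σ_i` and `σ_j`. -/
def lcmCofactor (i j : Fin (n - 1)) : List (Fin (n - 1)) := if Far i j then [j] else [j, i]

theorem lcmCofactor_of_far (h : Far i j) : lcmCofactor i j = [j] := if_pos h

theorem lcmCofactor_of_adj (h : Adj i j) : lcmCofactor i j = [j, i] := if_neg h.not_far

theorem lcmCofactor_append_of_far (h : Far i j) (t : List (Fin (n - 1))) :
    lcmCofactor i j ++ t = j :: t := by
  rw [lcmCofactor_of_far h, List.singleton_append]

theorem lcmCofactor_append_of_adj (h : Adj i j) (t : List (Fin (n - 1))) :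
    lcmCofactor i j ++ t = j :: i :: t := by
  rw [lcmCofactor_of_adj h, List.cons_append, List.singleton_append]

theorem length_lcmCofactor_append_comm (h : i ≠ j) (t : List (Fin (n - 1))) :
    (lcmCofactor i j ++ t).length = (lcmCofactor j i ++ t).length := by
  rcases far_or_adj_of_ne h with h | h
  · simp [lcmCofactor_append_of_far h, lcmCofactor_append_of_far h.symm]
  · simp [lcmCofactor_append_of_adj h, lcmCofactor_append_of_adj h.symm]

theorem Far.of_mem_lcmCofactor (hi : Far p i) (hj : Far p j) (ha : a ∈ lcmCofactor i j) :
    Far p a := by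
  unfold lcmCofactor at ha
  split_ifs at ha <;> simp only [List.mem_cons, List.not_mem_nil, or_false] at ha <;>
    rcases ha with rfl | rfl <;> assumption

def LcmFactorization (i : Fin (n - 1)) (u : List (Fin (n - 1))) (j : Fin (n - 1))
    (v : List (Fin (n - 1))) : Prop :=
  (i = j → u ≈ᵇ v) ∧
    (i ≠ j → ∃ w, u ≈ᵇ lcmCofactor i j ++ w ∧ v ≈ᵇ lcmCofactor j i ++ w)

theorem LcmFactorization.of_braidEquiv {u' : List (Fin (n - 1))} (h : u ≈ᵇ u')
    (hF : LcmFactorization i u' j v) :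
    LcmFactorization i u j v :=
  ⟨fun hij => h.trans (hF.1 hij), fun hij => (hF.2 hij).imp fun _ hw => ⟨h.trans hw.1, hw.2⟩⟩

def LcmFactorizationBelow (n L : ℕ) : Prop :=
  ∀ ⦃i j : Fin (n - 1)⦄ ⦃u v : List (Fin (n - 1))⦄,
    u.length < L → i :: u ≈ᵇ j :: v → LcmFactorization i u j v

namespace LcmFactorizationBelow

variable {L : ℕ} (ih : LcmFactorizationBelow n L)
include ih

theorem cancel (hu : u.length < L) (h : i :: u ≈ᵇ i :: v) : u ≈ᵇ v :=
  (ih hu h).1 rfl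

theorem factor (hij : i ≠ j) (hu : u.length < L) (h : i :: u ≈ᵇ j :: v) :
    ∃ w, u ≈ᵇ lcmCofactor i j ++ w ∧ v ≈ᵇ lcmCofactor j i ++ w :=
  (ih hu h).2 hij

theorem cancel_append (hlen : (s ++ u).length ≤ L) (h : s ++ u ≈ᵇ s ++ v) : u ≈ᵇ v := by
  induction s with
  | nil => exact h
  | cons a s ihs =>
    simp only [List.cons_append, List.length_cons] at hlen h
    exact ihs (by omega) (ih.cancel (by omega) h)

-- In `cube_R₁_R₂_R₃` the relations `Rₖ` are those of `p, i`, of `p, j` and of `i, j`.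

theorem cube_far_far (hij : i ≠ j) (hpi : Far p i) (hpj : Far p j) (ht : t.length < L)
    (H : i :: t ≈ᵇ j :: c) :
    ∃ w, p :: t ≈ᵇ lcmCofactor i j ++ w ∧ p :: c ≈ᵇ lcmCofactor j i ++ w := by
  obtain ⟨d, htd, hcd⟩ := ih.factor hij ht H
  exact ⟨p :: d,
    (htd.cons p).trans (.cons_append_of_far (fun _ ha => hpi.of_mem_lcmCofactor hpj ha) d),
    (hcd.cons p).trans (.cons_append_of_far (fun _ ha => hpj.of_mem_lcmCofactor hpi ha) d)⟩

theorem cube_far_adj_far (hpi : Far p i) (hpj : Adj p j) (hij : Far i j) (ht : t.length < L)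
    (H : i :: t ≈ᵇ j :: p :: c) :
    ∃ w, p :: t ≈ᵇ j :: w ∧ p :: j :: c ≈ᵇ i :: w := by
  obtain ⟨d, htd, hcd⟩ := ih.factor hij.ne ht H
  simp only [lcmCofactor_append_of_far hij, lcmCofactor_append_of_far hij.symm] at htd hcd
  have hc : c.length < L := by
    have := H.length_eq
    simp only [List.length_cons] at this
    omega
  obtain ⟨e, hce, hde⟩ := ih.factor hpi.ne hc hcd
  simp only [lcmCofactor_append_of_far hpi, lcmCofactor_append_of_far hpi.symm] at hce hde
  refine ⟨p :: j :: e, ?_, ?_⟩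
  · calc p :: t ≈ᵇ p :: j :: d := htd.cons p
      _ ≈ᵇ p :: j :: p :: e := (hde.cons j).cons p
      _ ≈ᵇ j :: p :: j :: e := .braid hpj e
  · calc p :: j :: c ≈ᵇ p :: j :: i :: e := (hce.cons j).cons p
      _ ≈ᵇ p :: i :: j :: e := (BraidEquiv.comm hij.symm e).cons p
      _ ≈ᵇ i :: p :: j :: e := .comm hpi _

theorem cube_far_adj_adj (hpi : Far p i) (hpj : Adj p j) (hij : Adj i j) (ht : t.length < L)
    (H : i :: t ≈ᵇ j :: p :: c) :
    ∃ w, p :: t ≈ᵇ j :: i :: w ∧ p :: j :: c ≈ᵇ i :: j :: w := by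
  have hc := H.length_eq
  obtain ⟨d, htd, hcd⟩ := ih.factor hij.ne ht H
  simp only [lcmCofactor_append_of_adj hij, lcmCofactor_append_of_adj hij.symm] at htd hcd
  have hd := htd.length_eq
  simp only [List.length_cons] at hc hd
  obtain ⟨e, hce, hde⟩ := ih.factor hpi.ne (by omega) hcd
  simp only [lcmCofactor_append_of_far hpi, lcmCofactor_append_of_far hpi.symm] at hce hde
  obtain ⟨g, hdg, heg⟩ := ih.factor hpj.symm.ne (by omega) hde
  simp only [lcmCofactor_append_of_adj hpj, lcmCofactor_append_of_adj hpj.symm] at hdg heg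
  refine ⟨p :: j :: i :: g, ?_, ?_⟩
  · calc p :: t ≈ᵇ p :: j :: i :: d := htd.cons p
      _ ≈ᵇ p :: j :: i :: p :: j :: g := ((hdg.cons i).cons j).cons p
      _ ≈ᵇ p :: j :: p :: i :: j :: g := ((BraidEquiv.comm hpi.symm _).cons j).cons p
      _ ≈ᵇ j :: p :: j :: i :: j :: g := .braid hpj _
      _ ≈ᵇ j :: p :: i :: j :: i :: g := ((BraidEquiv.braid hij.symm _).cons p).cons j
      _ ≈ᵇ j :: i :: p :: j :: i :: g := (BraidEquiv.comm hpi _).cons j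
  · calc p :: j :: c ≈ᵇ p :: j :: i :: e := (hce.cons j).cons p
      _ ≈ᵇ p :: j :: i :: j :: p :: g := ((heg.cons i).cons j).cons p
      _ ≈ᵇ p :: i :: j :: i :: p :: g := (BraidEquiv.braid hij.symm _).cons p
      _ ≈ᵇ i :: p :: j :: i :: p :: g := .comm hpi _
      _ ≈ᵇ i :: p :: j :: p :: i :: g := (((BraidEquiv.comm hpi.symm _).cons j).cons p).cons i
      _ ≈ᵇ i :: j :: p :: j :: i :: g := (BraidEquiv.braid hpj _).cons i

theorem cube_adj_adj (hpi : Adj p i) (hpj : Adj p j) (hij : Far i j) (ht : (p :: t).length < L)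
    (H : i :: p :: t ≈ᵇ j :: p :: c) :
    ∃ w, p :: i :: t ≈ᵇ j :: w ∧ p :: j :: c ≈ᵇ i :: w := by
  have hex : ∀ {k l}, Adj p k → Adj p l → Far k l →
      ∀ m, p :: k :: l :: p :: k :: m ≈ᵇ l :: p :: k :: l :: p :: m := by
    intro k l hk hl hkl m
    calc p :: k :: l :: p :: k :: m
        _ ≈ᵇ p :: l :: k :: p :: k :: m := (BraidEquiv.comm hkl _).cons p
        _ ≈ᵇ p :: l :: p :: k :: p :: m := ((BraidEquiv.braid hk.symm _).cons l).cons p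
        _ ≈ᵇ l :: p :: l :: k :: p :: m := .braid hl _
        _ ≈ᵇ l :: p :: k :: l :: p :: m := ((BraidEquiv.comm hkl.symm _).cons p).cons l
  have hc := H.length_eq
  obtain ⟨d, htd, hcd⟩ := ih.factor hij.ne ht H
  simp only [lcmCofactor_append_of_far hij, lcmCofactor_append_of_far hij.symm] at htd hcd
  simp only [List.length_cons] at hc ht
  obtain ⟨e, hte, hde⟩ := ih.factor hpj.ne (by omega) htd
  obtain ⟨g, hcg, hdg⟩ := ih.factor hpi.ne (by omega) hcd
  simp only [lcmCofactor_append_of_adj hpi, lcmCofactor_append_of_adj hpi.symm,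
    lcmCofactor_append_of_adj hpj, lcmCofactor_append_of_adj hpj.symm] at hte hde hcg hdg
  have he := hte.length_eq
  simp only [List.length_cons] at he
  obtain ⟨m, hem, hgm⟩ :=
    ih.factor hij.ne.symm (by omega) (ih.cancel (by simp; omega) (hde.symm.trans hdg))
  simp only [lcmCofactor_append_of_far hij, lcmCofactor_append_of_far hij.symm] at hem hgm
  refine ⟨p :: i :: j :: p :: m, ?_, ?_⟩
  · calc p :: i :: t ≈ᵇ p :: i :: j :: p :: e := (hte.cons i).cons p
      _ ≈ᵇ p :: i :: j :: p :: i :: m := (((hem.cons p).cons j).cons i).cons p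
      _ ≈ᵇ j :: p :: i :: j :: p :: m := hex hpi hpj hij m
  · calc p :: j :: c ≈ᵇ p :: j :: i :: p :: g := (hcg.cons j).cons p
      _ ≈ᵇ p :: j :: i :: p :: j :: m := (((hgm.cons p).cons i).cons j).cons p
      _ ≈ᵇ i :: p :: j :: i :: p :: m := hex hpj hpi hij.symm m
      _ ≈ᵇ i :: p :: i :: j :: p :: m := ((BraidEquiv.comm hij.symm _).cons p).cons i

theorem cube_of_far_left (hij : i ≠ j) (hpi : Far p i) (hpj : p ≠ j)
    (hlen : (lcmCofactor p i ++ t).length ≤ L)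
    (H : lcmCofactor p i ++ t ≈ᵇ lcmCofactor p j ++ c) :
    ∃ w, lcmCofactor i p ++ t ≈ᵇ lcmCofactor i j ++ w ∧
      lcmCofactor j p ++ c ≈ᵇ lcmCofactor j i ++ w := by
  simp only [lcmCofactor_append_of_far hpi, lcmCofactor_append_of_far hpi.symm,
    List.length_cons] at hlen H ⊢
  rcases far_or_adj_of_ne hpj with hpj | hpj
  · simp only [lcmCofactor_append_of_far hpj, lcmCofactor_append_of_far hpj.symm] at H ⊢
    exact ih.cube_far_far hij hpi hpj (by omega) H
  simp only [lcmCofactor_append_of_adj hpj, lcmCofactor_append_of_adj hpj.symm] at H ⊢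
  rcases far_or_adj_of_ne hij with hij | hij
  · simp only [lcmCofactor_append_of_far hij, lcmCofactor_append_of_far hij.symm]
    exact ih.cube_far_adj_far hpi hpj hij (by omega) H
  · simp only [lcmCofactor_append_of_adj hij, lcmCofactor_append_of_adj hij.symm]
    exact ih.cube_far_adj_adj hpi hpj hij (by omega) H

theorem cube_condition (hij : i ≠ j) (hpi : p ≠ i) (hpj : p ≠ j)
    (hlen : (lcmCofactor p i ++ t).length ≤ L)
    (H : lcmCofactor p i ++ t ≈ᵇ lcmCofactor p j ++ c) :
    ∃ w, lcmCofactor i p ++ t ≈ᵇ lcmCofactor i j ++ w ∧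
      lcmCofactor j p ++ c ≈ᵇ lcmCofactor j i ++ w := by
  rcases far_or_adj_of_ne hpi with hpi | hpi
  · exact ih.cube_of_far_left hij hpi hpj hlen H
  rcases far_or_adj_of_ne hpj with hpj | hpj
  · obtain ⟨w, h1, h2⟩ := ih.cube_of_far_left hij.symm hpj hpi.ne (H.length_eq ▸ hlen) H.symm
    exact ⟨w, h2, h1⟩
  have hij := Far.of_adj_of_adj hpi hpj hij
  simp only [lcmCofactor_append_of_adj hpi, lcmCofactor_append_of_adj hpi.symm,
    lcmCofactor_append_of_adj hpj, lcmCofactor_append_of_adj hpj.symm,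
    lcmCofactor_append_of_far hij, lcmCofactor_append_of_far hij.symm] at hlen H ⊢
  exact ih.cube_adj_adj hpi hpj hij (by simpa using hlen) H

theorem lcmFactorization_swap_head (hip : i ≠ p) (hlen : (lcmCofactor i p ++ t).length ≤ L)
    (hF : LcmFactorization p (lcmCofactor p i ++ t) j v) :
    LcmFactorization i (lcmCofactor i p ++ t) j v := by
  have hlen' : (lcmCofactor p i ++ t).length ≤ L := by
    rwa [length_lcmCofactor_append_comm hip.symm]
  by_cases hpj : p = j
  · subst hpj
    exact ⟨fun hij => absurd hij hip, fun _ => ⟨t, .refl _, (hF.1 rfl).symm⟩⟩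
  obtain ⟨c, htc, hvc⟩ := hF.2 hpj
  by_cases hij : i = j
  · subst hij
    exact ⟨fun _ => ((ih.cancel_append hlen' htc).append_left _).trans hvc.symm,
      fun h => absurd rfl h⟩
  · obtain ⟨w, h1, h2⟩ := ih.cube_condition hij hip.symm hpj hlen' htc
    exact ⟨fun h => absurd h hij, fun _ => ⟨w, h1, hvc.trans h2⟩⟩

end LcmFactorizationBelow

theorem BraidStep.cons_cases (h : BraidStep (i :: u) v) :
    (∃ u', BraidStep u u' ∧ v = i :: u') ∨
      ∃ p t, i ≠ p ∧ u = lcmCofactor i p ++ t ∧ v = p :: (lcmCofactor p i ++ t) := by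
  cases h with
  | comm t h =>
    exact .inr ⟨_, t, h.ne, (lcmCofactor_append_of_far h t).symm,
      by rw [lcmCofactor_append_of_far h.symm]⟩
  | braid t h =>
    exact .inr ⟨_, t, h.ne, (lcmCofactor_append_of_adj h t).symm,
      by rw [lcmCofactor_append_of_adj h.symm]⟩
  | cons _ h => exact .inl ⟨_, h, rfl⟩

theorem lcmFactorizationBelow (L : ℕ) : LcmFactorizationBelow n L := by
  induction L with
  | zero => exact fun _ _ _ _ hu => absurd hu (Nat.not_lt_zero _)
  | succ L ih =>
    intro i j u v hu H
    suffices ∀ a, a ≈ᵇ j :: v → ∀ i u, a = i :: u → u.length < L + 1 →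
        LcmFactorization i u j v from this _ H i u rfl hu
    intro a ha
    induction ha using Relation.ReflTransGen.head_induction_on with
    | refl =>
      rintro _ _ ⟨⟩ -
      exact ⟨fun _ => .refl _, fun h => absurd rfl h⟩
    | head hstep _ ihchain =>
      rintro i u rfl hu
      rcases hstep.cons_cases with ⟨u', hu', rfl⟩ | ⟨p, t, hip, rfl, rfl⟩
      · exact (ihchain i u' rfl (hu'.length_eq ▸ hu)).of_braidEquiv (.of_step hu')
      · refine ih.lcmFactorization_swap_head hip (by omega) (ihchain p _ rfl ?_)
        rwa [length_lcmCofactor_append_comm hip.symm]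

theorem BraidEquiv.cancel_append_left (s : List (Fin (n - 1))) (h : s ++ u ≈ᵇ s ++ v) :
    u ≈ᵇ v :=
  (lcmFactorizationBelow _).cancel_append le_rfl h

theorem BraidEquiv.cancel_append_right (s : List (Fin (n - 1))) (h : u ++ s ≈ᵇ v ++ s) :
    u ≈ᵇ v := by
  have h' := (cancel_append_left s.reverse (by simpa using h.reverse)).reverse
  rwa [List.reverse_reverse, List.reverse_reverse] at h'

def ofWord (l : List (Fin (n - 1))) : BraidMonoid n :=
  (conGen (BraidRel n)).mk' (FreeMonoid.ofList l)

theorem ofWord_nil : ofWord [] = (1 : BraidMonoid n) := rfl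

theorem ofWord_append (u v : List (Fin (n - 1))) : ofWord (u ++ v) = ofWord u * ofWord v :=
  map_mul (conGen (BraidRel n)).mk' _ _

theorem ofWord_singleton (a : Fin (n - 1)) : ofWord [a] = gen a := rfl

theorem ofWord_cons (a : Fin (n - 1)) (u : List (Fin (n - 1))) :
    ofWord (a :: u) = gen a * ofWord u :=
  ofWord_append [a] u

theorem ofWord_surjective : Function.Surjective (ofWord (n := n)) := fun x =>
  (Con.mk'_surjective x).imp fun _ hw => hw

theorem gen_mul_gen_comm (h : Far i j) : gen i * gen j = gen j * gen i := by
  simp only [← ofWord_singleton, ← ofWord_append]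
  refine (Con.eq _).2 ?_
  rcases h with h | h
  · exact ConGen.Rel.of _ _ (BraidRel.comm i j h)
  · exact (ConGen.Rel.of _ _ (BraidRel.comm j i h)).symm

theorem gen_braid (h : Adj i j) : gen i * gen j * gen i = gen j * gen i * gen j := by
  simp only [← ofWord_singleton, ← ofWord_append]
  refine (Con.eq _).2 ?_
  rcases h with h | h
  · exact ConGen.Rel.of _ _ (BraidRel.braid i j h)
  · exact (ConGen.Rel.of _ _ (BraidRel.braid j i h)).symm

theorem braidEquiv_of_conGen {x y : FreeMonoid (Fin (n - 1))} (h : conGen (BraidRel n) x y) :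
    x.toList ≈ᵇ y.toList := by
  induction h with
  | of _ _ hxy =>
    cases hxy with
    | comm i j h => exact .comm (Or.inl h) []
    | braid i j h => exact .braid (Or.inl h) []
  | refl => rfl
  | symm _ ih => exact ih.symm
  | trans _ _ ih ih' => exact ih.trans ih'
  | mul _ _ ih ih' => exact (ih.append_right _).trans (ih'.append_left _)

theorem BraidStep.ofWord_eq (h : BraidStep u v) : ofWord u = ofWord v := by
  induction h with
  | comm t h => simp only [ofWord_cons, ← mul_assoc, gen_mul_gen_comm h]
  | braid t h => simp only [ofWord_cons, ← mul_assoc, gen_braid h]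
  | cons a _ ih => rw [ofWord_cons, ofWord_cons, ih]

theorem ofWord_eq_ofWord_iff : ofWord u = ofWord v ↔ u ≈ᵇ v := by
  refine ⟨fun h => braidEquiv_of_conGen ((Con.eq _).1 h), fun h => ?_⟩
  induction h with
  | refl => rfl
  | tail _ hstep ih => exact ih.trans hstep.ofWord_eq

instance : IsCancelMul (BraidMonoid n) where
  mul_left_cancel a x y h := by
    obtain ⟨s, rfl⟩ := ofWord_surjective a
    obtain ⟨u, rfl⟩ := ofWord_surjective x
    obtain ⟨v, rfl⟩ := ofWord_surjective y
    simp only [← ofWord_append, ofWord_eq_ofWord_iff] at h ⊢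
    exact h.cancel_append_left s
  mul_right_cancel a x y h := by
    obtain ⟨s, rfl⟩ := ofWord_surjective a
    obtain ⟨u, rfl⟩ := ofWord_surjective x
    obtain ⟨v, rfl⟩ := ofWord_surjective y
    simp only [← ofWord_append, ofWord_eq_ofWord_iff] at h ⊢
    exact h.cancel_append_right s

theorem ofWord_ne_one (h : u ≠ []) : ofWord u ≠ 1 := by
  rw [← ofWord_nil, Ne, ofWord_eq_ofWord_iff]
  exact fun h' => h (List.eq_nil_of_length_eq_zero h'.length_eq)

theorem exists_gen_dvd_iff (y : BraidMonoid n) : (∃ i, gen i ∣ y) ↔ y ≠ 1 := by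
  obtain ⟨u, rfl⟩ := ofWord_surjective y
  constructor
  · rintro ⟨i, z, hz⟩
    obtain ⟨v, rfl⟩ := ofWord_surjective z
    rw [hz, ← ofWord_cons]
    exact ofWord_ne_one (List.cons_ne_nil i v)
  · cases u with
    | nil => exact fun h => absurd ofWord_nil h
    | cons i u => exact fun _ => ⟨i, ofWord u, ofWord_cons i u⟩

theorem exists_gen_rdvd_iff (y : BraidMonoid n) : (∃ i z, y = z * gen i) ↔ y ≠ 1 := by
  obtain ⟨u, rfl⟩ := ofWord_surjective y
  constructor
  · rintro ⟨i, z, hz⟩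
    obtain ⟨v, rfl⟩ := ofWord_surjective z
    rw [hz, ← ofWord_singleton, ← ofWord_append]
    exact ofWord_ne_one (by simp)
  · rcases List.eq_nil_or_concat u with rfl | ⟨u, i, rfl⟩
    · exact fun h => absurd ofWord_nil h
    · exact fun _ => ⟨i, ofWord u, by rw [List.concat_eq_append, ofWord_append]; rfl⟩

theorem mobius_inversion_simples_general (n : ℕ)
    (Δhat : Finset (Fin (n - 1)) → BraidMonoid n)
    (hlub_l : ∀ X : Finset (Fin (n - 1)),
      (∀ i ∈ X, ldvd (gen i) (Δhat X)) ∧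
        ∀ z : BraidMonoid n, (∀ i ∈ X, ldvd (gen i) z) → ldvd (Δhat X) z)
    (hlub_r : ∀ X : Finset (Fin (n - 1)),
      (∀ i ∈ X, rdvd (gen i) (Δhat X)) ∧
        ∀ z : BraidMonoid n, (∀ i ∈ X, rdvd (gen i) z) → rdvd (Δhat X) z)
    (f h : BraidMonoid n → ℝ)
    (hfin : ∀ x : BraidMonoid n, {y : BraidMonoid n | x * y ∈ Simples n}.Finite) :
    (∀ x ∈ Simples n, f x = ∑ y ∈ (hfin x).toFinset, h (x * y)) ↔
      (∀ x ∈ Simples n, h x = ∑ X : Finset (Fin (n - 1)),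
          if x * Δhat X ∈ Simples n then (-1 : ℝ) ^ X.card * f (x * Δhat X) else 0) := by
  refine mobius_inversion_of_lcm gen Δhat (fun X y => ?_) exists_gen_dvd_iff (fun X y => ?_)
    exists_gen_rdvd_iff (fun x y hxy => ?_) hfin f h
  · exact ⟨fun hy i hi => dvd_trans ((hlub_l X).1 i hi) hy, (hlub_l X).2 y⟩
  · refine ⟨fun ⟨z, hz⟩ i hi => ?_, (hlub_r X).2 y⟩
    obtain ⟨w, hw⟩ := (hlub_r X).1 i hi
    exact ⟨z * w, by rw [hz, hw, mul_assoc]⟩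
  · obtain ⟨z, hz⟩ := hxy
    exact ⟨y * z, by rw [hz, mul_assoc]⟩

/-- Möbius inversion on the (finite) set of simple braids. -/
theorem mobius_inversion_simples (n : ℕ) (hn : 2 ≤ n)
    (Δhat : Finset (Fin (n - 1)) → BraidMonoid n)
    (hlub_l : ∀ X : Finset (Fin (n - 1)),
      (∀ i ∈ X, ldvd (gen i) (Δhat X)) ∧
        ∀ z : BraidMonoid n, (∀ i ∈ X, ldvd (gen i) z) → ldvd (Δhat X) z)
    (hlub_r : ∀ X : Finset (Fin (n - 1)),
      (∀ i ∈ X, rdvd (gen i) (Δhat X)) ∧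
        ∀ z : BraidMonoid n, (∀ i ∈ X, rdvd (gen i) z) → rdvd (Δhat X) z)
    (hΔ : Δhat Finset.univ = garside n)
    (f h : BraidMonoid n → ℝ)
    (hfin : ∀ x : BraidMonoid n, {y : BraidMonoid n | x * y ∈ Simples n}.Finite) :
    (∀ x ∈ Simples n, f x = ∑ y ∈ (hfin x).toFinset, h (x * y)) ↔
      (∀ x ∈ Simples n, h x = ∑ X : Finset (Fin (n - 1)),
          if x * Δhat X ∈ Simples n then (-1 : ℝ) ^ X.card * f (x * Δhat X) else 0) :=
  mobius_inversion_simples_general n Δhat hlub_l hlub_r f h hfin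

end BraidMeasure
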